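/- For all strictly positive parameter values, the Jacobian matrix DF(v₁) of F at the virus-free equilibrium v₁ = (1,0,0,0,0,0,0) is singular (has 0 as an eigenvalue) if and only if at least one of the following three parameter relations holds: (i) β₁ = β₂; (ii) α·((κ₁ − ν)γ₁ − μν) = ζ(γ₁ + μ) (the transcritical bifurcation T₁₃); (iii) αˢ(1 − νˢ) = ζˢ (the transcritical bifurcation T₁₂). -/

import Mathlib

/-!
Order the variables as x₁, x₂, (yˢ, zˢ), (y₁, z), y₂. At v₁ the Jacobian is then block upper
triangular: the x₁-column and the x₂-row are trivial and y₂ feeds into z only. Hence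
det DF(v₁) = ±(β₁ − β₂) γ₂ · det B(yˢ, zˢ) · det B(y₁, z), where
det B(yˢ, zˢ) = γˢ (ζˢ − αˢ (1 − νˢ)) and det B(y₁, z) = ζ (γ₁ + μ) − α ((κ₁ − ν) γ₁ − μ ν).
-/

open Polynomial in
noncomputable def jacobianMatrix (F : (Fin 7 → ℝ) → (Fin 7 → ℝ)) (p : Fin 7 → ℝ) :
    Matrix (Fin 7) (Fin 7) ℝ :=
  Matrix.of fun i j => fderiv ℝ (fun v => F v i) p (Pi.single j 1)

theorem Matrix.det_succ_eq_mul_det_submatrix_succ {R : Type*} [CommRing R] {n : ℕ}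
    (A : Matrix (Fin (n + 1)) (Fin (n + 1)) R) (hA : ∀ i : Fin n, A i.succ 0 = 0) :
    A.det = A 0 0 * (A.submatrix Fin.succ Fin.succ).det := by
  rw [Matrix.det_succ_column_zero, Fin.sum_univ_succ,
    Finset.sum_eq_zero fun i _ => by rw [hA i, mul_zero, zero_mul]]
  simp

theorem jacobianMatrix_apply_eq_deriv_update {F : (Fin 7 → ℝ) → (Fin 7 → ℝ)} {p : Fin 7 → ℝ}
    {i : Fin 7} (hF : DifferentiableAt ℝ (fun v => F v i) p) (j : Fin 7) :
    jacobianMatrix F p i j = deriv (fun t => F (Function.update p j t) i) (p j) :=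
  ((hF.hasFDerivAt.comp_hasDerivAt_of_eq (p j) (hasDerivAt_update p j (p j))
    (Function.update_eq_self j p).symm).deriv).symm

section HostPathogen

variable (α αs β₁ β₂ μ γs γ₁ γ₂ κ₁ κ₂ ν νs ζs ζ : ℝ)

def hostPathogenField (v : Fin 7 → ℝ) : Fin 7 → ℝ := ![
  v 0 * (1 - v 0 - v 1) - α * v 0 * v 6 - αs * v 0 * v 5,
  v 1 * (β₁ - β₂ * (v 0 + v 1)) - α * v 1 * v 6,
  αs * v 5 * v 0 + μ * v 3 - γs * v 2,
  α * v 6 * v 0 - (μ + γ₁) * v 3,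
  α * v 6 * v 1 - γ₂ * v 4,
  γs * v 2 - νs * αs * v 5 * v 0 - ζs * v 5,
  κ₁ * γ₁ * v 3 + κ₂ * γ₂ * v 4 - ν * α * v 6 * (v 0 + v 1) - ζ * v 6]

def virusFreeJacobian : Matrix (Fin 7) (Fin 7) ℝ :=
  !![-1, -1, 0, 0, 0, -αs, -α;
     0, β₁ - β₂, 0, 0, 0, 0, 0;
     0, 0, -γs, μ, 0, αs, 0;
     0, 0, 0, -(μ + γ₁), 0, 0, α;
     0, 0, 0, 0, -γ₂, 0, 0;
     0, 0, γs, 0, 0, -(νs * αs + ζs), 0;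
     0, 0, 0, κ₁ * γ₁, κ₂ * γ₂, 0, -(ν * α + ζ)]

theorem differentiable_hostPathogenField_apply (i : Fin 7) :
    Differentiable ℝ fun v => hostPathogenField α αs β₁ β₂ μ γs γ₁ γ₂ κ₁ κ₂ ν νs ζs ζ v i := by
  fin_cases i <;> simp [hostPathogenField] <;> fun_prop

theorem jacobianMatrix_hostPathogenField_v₁ :
    jacobianMatrix (hostPathogenField α αs β₁ β₂ μ γs γ₁ γ₂ κ₁ κ₂ ν νs ζs ζ)
        ![1, 0, 0, 0, 0, 0, 0] =
      virusFreeJacobian α αs β₁ β₂ μ γs γ₁ γ₂ κ₁ κ₂ ν νs ζs ζ := by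
  ext i j
  rw [jacobianMatrix_apply_eq_deriv_update (differentiable_hostPathogenField_apply ..)]
  fin_cases i <;> fin_cases j <;> simp [hostPathogenField, virusFreeJacobian]
  all_goals (simp (disch := fun_prop) [deriv_fun_mul, deriv_fun_sub] <;> ring)

theorem det_virusFreeJacobian :
    (virusFreeJacobian α αs β₁ β₂ μ γs γ₁ γ₂ κ₁ κ₂ ν νs ζs ζ).det =
      γ₂ * γs * ((β₁ - β₂) *
        ((α * ((κ₁ - ν) * γ₁ - μ * ν) - ζ * (γ₁ + μ)) * (αs * (1 - νs) - ζs))) := by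
  rw [Matrix.det_succ_eq_mul_det_submatrix_succ _
      (by simp [virusFreeJacobian, Fin.forall_fin_succ]),
    Matrix.det_succ_eq_mul_det_submatrix_succ _
      (by simp [virusFreeJacobian, Fin.forall_fin_succ])]
  simp [virusFreeJacobian, Matrix.det_succ_row_zero, Fin.sum_univ_succ, Fin.succAbove,
    Fin.castSucc, Fin.castAdd, Fin.castLE]
  ring

end HostPathogen

theorem singular_jacobian_at_v₁_iff_general
    (α αs β₁ β₂ μ γs γ₁ γ₂ κ₁ κ₂ ν νs ζs ζ : ℝ)
    (hγs : 0 < γs) (hγ₂ : 0 < γ₂)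
    (F : (Fin 7 → ℝ) → (Fin 7 → ℝ))
    (hF : ∀ v : Fin 7 → ℝ, F v = ![
      v 0 * (1 - v 0 - v 1) - α * v 0 * v 6 - αs * v 0 * v 5,
      v 1 * (β₁ - β₂ * (v 0 + v 1)) - α * v 1 * v 6,
      αs * v 5 * v 0 + μ * v 3 - γs * v 2,
      α * v 6 * v 0 - (μ + γ₁) * v 3,
      α * v 6 * v 1 - γ₂ * v 4,
      γs * v 2 - νs * αs * v 5 * v 0 - ζs * v 5,
      κ₁ * γ₁ * v 3 + κ₂ * γ₂ * v 4 - ν * α * v 6 * (v 0 + v 1) - ζ * v 6]) :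
    (jacobianMatrix F ![1, 0, 0, 0, 0, 0, 0]).det = 0 ↔
      (β₁ = β₂ ∨ α * ((κ₁ - ν) * γ₁ - μ * ν) = ζ * (γ₁ + μ) ∨ αs * (1 - νs) = ζs) := by
  obtain rfl : F = hostPathogenField α αs β₁ β₂ μ γs γ₁ γ₂ κ₁ κ₂ ν νs ζs ζ := funext hF
  rw [jacobianMatrix_hostPathogenField_v₁, det_virusFreeJacobian]
  simp only [mul_eq_zero, sub_eq_zero, hγ₂.ne', hγs.ne', or_self, false_or]

theorem singular_jacobian_at_v₁_iff
    (α αs β₁ β₂ μ γs γ₁ γ₂ κ₁ κ₂ ν νs ζs ζ : ℝ)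
    (hα : 0 < α) (hαs : 0 < αs) (hβ₁pos : 0 < β₁) (hβ₂pos : 0 < β₂)
    (hμ : 0 < μ) (hγs : 0 < γs) (hγ₁ : 0 < γ₁) (hγ₂ : 0 < γ₂)
    (hκ₁ : 0 < κ₁) (hκ₂ : 0 < κ₂) (hν : 0 < ν) (hνs : 0 < νs)
    (hζs : 0 < ζs) (hζ : 0 < ζ)
    (F : (Fin 7 → ℝ) → (Fin 7 → ℝ))
    (hF : ∀ v : Fin 7 → ℝ, F v = ![
      v 0 * (1 - v 0 - v 1) - α * v 0 * v 6 - αs * v 0 * v 5,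
      v 1 * (β₁ - β₂ * (v 0 + v 1)) - α * v 1 * v 6,
      αs * v 5 * v 0 + μ * v 3 - γs * v 2,
      α * v 6 * v 0 - (μ + γ₁) * v 3,
      α * v 6 * v 1 - γ₂ * v 4,
      γs * v 2 - νs * αs * v 5 * v 0 - ζs * v 5,
      κ₁ * γ₁ * v 3 + κ₂ * γ₂ * v 4 - ν * α * v 6 * (v 0 + v 1) - ζ * v 6]) :
    (jacobianMatrix F ![1, 0, 0, 0, 0, 0, 0]).det = 0 ↔
      (β₁ = β₂ ∨ α * ((κ₁ - ν) * γ₁ - μ * ν) = ζ * (γ₁ + μ) ∨ αs * (1 - νs) = ζs) :=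
  singular_jacobian_at_v₁_iff_general α αs β₁ β₂ μ γs γ₁ γ₂ κ₁ κ₂ ν νs ζs ζ hγs hγ₂ F hF
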